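/- arXiv:2307.03209 — 4 statements merged into one kernel-verified Lean document; each statement's English description precedes it below -/
import Mathlib

section
/- The Laplacian matrix L = D - A of any semigraph G is positive semi-definite. -/
open Matrix BigOperators

/-- A semigraph on a finite vertex type `V`: edges are ordered tuples (lists) of
distinct vertices, of length at least 2, and any two distinct edges share at most
one vertex. -/
structure Semigraph (V : Type) [Fintype V] [DecidableEq V] where
  edges : Finset (List V)
  nodup : ∀ e ∈ edges, e.Nodup
  two_le : ∀ e ∈ edges, 2 ≤ e.length
  inter : ∀ e₁ ∈ edges, ∀ e₂ ∈ edges, e₁ ≠ e₂ → (e₁.toFinset ∩ e₂.toFinset).card ≤ 1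

namespace Semigraph

variable {V : Type} [Fintype V] [DecidableEq V] (G : Semigraph V)

/-- `v` is an end vertex of the edge `e`. -/
def IsEndOf (v : V) (e : List V) : Prop := e.head? = some v ∨ e.getLast? = some v

/-- `v` is a middle vertex of the edge `e`. -/
def IsMiddleOf (v : V) (e : List V) : Prop := v ∈ e ∧ ¬ IsEndOf v e

/-- `v` is a middle end vertex: a middle vertex of some edge and an end vertex of
some (other) edge. -/
def IsMiddleEnd (v : V) : Prop :=
  (∃ e ∈ G.edges, IsMiddleOf v e) ∧ (∃ e ∈ G.edges, IsEndOf v e)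

/-- `v` is a pure end vertex: it lies on some edge and is an end vertex of every
edge containing it. -/
def IsPureEnd (v : V) : Prop :=
  (∃ e ∈ G.edges, v ∈ e) ∧ ∀ e ∈ G.edges, v ∈ e → IsEndOf v e

open Classical in
/-- The adjacency weight contributed by the edge `e` to the pair of vertices `(u, v)`:
the skeleton distance between `u` and `v` inside `e`, halved once for a partial half
edge at the head, and halved once for a partial half edge at the tail (so a quarter
edge gets weight `1/4`). -/
noncomputable def pairWeight (e : List V) (u v : V) : ℝ :=
  if u ∈ e ∧ v ∈ e ∧ u ≠ v then
    (Nat.dist (e.idxOf u) (e.idxOf v) : ℝ) *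
      (if ({e.idxOf u, e.idxOf v} : Set ℕ) = {0, 1} ∧
          (∃ w, e.head? = some w ∧ G.IsMiddleEnd w) then (1:ℝ)/2 else 1) *
      (if ({e.idxOf u, e.idxOf v} : Set ℕ) = {e.length - 2, e.length - 1} ∧
          (∃ w, e.getLast? = some w ∧ G.IsMiddleEnd w) then (1:ℝ)/2 else 1)
  else 0

/-- The adjacency matrix of a semigraph. -/
noncomputable def adj : Matrix V V ℝ :=
  fun u v => ∑ e ∈ G.edges, G.pairWeight e u v

/-- The degree of a vertex: the corresponding row sum of the adjacency matrix. -/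
noncomputable def degree (v : V) : ℝ := ∑ u, G.adj v u

/-- The Laplacian matrix `L = D - A` of a semigraph. -/
noncomputable def lap : Matrix V V ℝ :=
  Matrix.diagonal G.degree - G.adj

/-- The Laplacian of a single edge, padded by zeros to an `n × n` matrix. -/
noncomputable def edgeLap (e : List V) : Matrix V V ℝ :=
  fun u v => if u = v then ∑ w, G.pairWeight e u w else - G.pairWeight e u v

/-- Two vertices are adjacent if they lie on a common edge. -/
def Adjacent (u v : V) : Prop := u ≠ v ∧ ∃ e ∈ G.edges, u ∈ e ∧ v ∈ e

/-- A semigraph is connected if any two vertices are joined by a chain of edges. -/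
def Connected : Prop :=
  ∀ u v : V, Relation.ReflTransGen (fun a b => ∃ e ∈ G.edges, a ∈ e ∧ b ∈ e) u v

end Semigraph

/-! The Laplacian of a semigraph is the weighted graph Laplacian `diag(∑ⱼ Wᵢⱼ) - W` of its
adjacency matrix `W`, which is symmetric with nonnegative entries. For such `W` the quadratic
form is `xᵀ L x = ½ ∑ᵢⱼ Wᵢⱼ (xᵢ - xⱼ)²`, a sum of nonnegative terms. -/

namespace Matrix

variable {n R : Type*} [Fintype n] [DecidableEq n] [CommRing R]

theorem two_mul_dotProduct_diagonal_rowSum_sub_mulVec (W : Matrix n n R) (hW : W.IsSymm)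
    (x : n → R) :
    2 * (x ⬝ᵥ ((diagonal (fun i => ∑ j, W i j) - W) *ᵥ x)) =
      ∑ i, ∑ j, W i j * (x i - x j) ^ 2 := by
  have hswap : ∑ i, ∑ j, W i j * x j ^ 2 = ∑ i, ∑ j, W i j * x i ^ 2 := by
    rw [Finset.sum_comm]
    exact Finset.sum_congr rfl fun i _ => Finset.sum_congr rfl fun j _ => by rw [hW.apply]
  have hquad : x ⬝ᵥ ((diagonal (fun i => ∑ j, W i j) - W) *ᵥ x) =
      ∑ i, ∑ j, W i j * x i ^ 2 - ∑ i, ∑ j, W i j * (x i * x j) := by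
    rw [sub_mulVec, dotProduct_sub]
    simp only [dotProduct, mulVec_diagonal]
    simp only [mulVec, dotProduct, Finset.sum_mul, Finset.mul_sum]
    congr 1 <;> exact Finset.sum_congr rfl fun i _ => Finset.sum_congr rfl fun j _ => by ring
  have hexpand : ∑ i, ∑ j, W i j * (x i - x j) ^ 2 =
      ∑ i, ∑ j, W i j * x i ^ 2 + ∑ i, ∑ j, W i j * x j ^ 2
        - 2 * ∑ i, ∑ j, W i j * (x i * x j) := by
    simp only [Finset.mul_sum, ← Finset.sum_add_distrib, ← Finset.sum_sub_distrib]
    exact Finset.sum_congr rfl fun i _ => Finset.sum_congr rfl fun j _ => by ring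
  rw [hquad, hexpand, hswap]
  ring

theorem posSemidef_diagonal_rowSum_sub [LinearOrder R] [IsStrictOrderedRing R] [StarRing R]
    [TrivialStar R] (W : Matrix n n R) (hW : W.IsSymm) (hW₀ : ∀ i j, 0 ≤ W i j) :
    (diagonal (fun i => ∑ j, W i j) - W).PosSemidef := by
  refine .of_dotProduct_mulVec_nonneg ?_ fun x => ?_
  · rw [IsHermitian, conjTranspose_eq_transpose_of_trivial]
    exact (isSymm_diagonal _).sub hW
  · have hsum : 0 ≤ ∑ i, ∑ j, W i j * (x i - x j) ^ 2 :=
      Finset.sum_nonneg fun i _ => Finset.sum_nonneg fun j _ => mul_nonneg (hW₀ i j) (sq_nonneg _)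
    rw [star_trivial]
    linarith [two_mul_dotProduct_diagonal_rowSum_sub_mulVec W hW x]

end Matrix

namespace Semigraph

variable {V : Type} [Fintype V] [DecidableEq V] (G : Semigraph V)

theorem pairWeight_nonneg (e : List V) (u v : V) : 0 ≤ G.pairWeight e u v := by
  unfold pairWeight
  split_ifs <;> positivity

theorem pairWeight_comm (e : List V) (u v : V) : G.pairWeight e u v = G.pairWeight e v u := by
  unfold pairWeight
  rw [Nat.dist_comm, Set.pair_comm]
  exact if_congr ⟨fun ⟨hu, hv, h⟩ => ⟨hv, hu, h.symm⟩, fun ⟨hv, hu, h⟩ => ⟨hu, hv, h.symm⟩⟩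
    rfl rfl

theorem adj_isSymm : G.adj.IsSymm :=
  IsSymm.ext fun u v => Finset.sum_congr rfl fun e _ => G.pairWeight_comm e v u

theorem adj_nonneg (u v : V) : 0 ≤ G.adj u v :=
  Finset.sum_nonneg fun e _ => G.pairWeight_nonneg e u v

end Semigraph

/-- The Laplacian matrix `L = D - A` of any semigraph is positive
semi-definite. -/
theorem stmt3 {V : Type} [Fintype V] [DecidableEq V] (G : Semigraph V) :
    G.lap.PosSemidef :=
  posSemidef_diagonal_rowSum_sub G.adj G.adj_isSymm G.adj_nonneg
end

section
/- The signless Laplacian Q = D + A of any semigraph G is positive semi-definite, and its quadratic form satisfies x^T Q x = Σ_{e ∈ E} Σ_j Σ_i μ_{ji} (x_j + x_{j+i})², a sum over all pairs of adjacent vertices within each edge with positive weights μ_{ji}. -/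
open Matrix BigOperators

/-! Expanding the squares, for any symmetric `A` one has
`xᵀ (D + A) x = ½ ∑ᵤ ∑ᵥ a_uv (x_u + x_v)²`, where `D` is the diagonal of row sums; the diagonal
absorbs the two square terms and symmetry the double counting of the cross terms. The adjacency
matrix of a semigraph is the sum over the edges of the symmetric, nonnegative pair weights, so
this form splits edge by edge and is nonnegative. -/

namespace Matrix

variable {n : Type*} [Fintype n] [DecidableEq n]

theorem dotProduct_diagonal_rowSum_add_mulVec {A : Matrix n n ℝ} (hA : A.IsSymm) (x : n → ℝ) :
    x ⬝ᵥ (diagonal (fun i => ∑ j, A i j) + A) *ᵥ x =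
      1 / 2 * ∑ i, ∑ j, A i j * (x i + x j) ^ 2 := by
  have hswap : ∑ i, ∑ j, A i j * x j ^ 2 = ∑ i, ∑ j, A i j * x i ^ 2 := by
    rw [Finset.sum_comm]
    simp_rw [hA.apply]
  have hexpand : ∑ i, ∑ j, A i j * (x i + x j) ^ 2 =
      ∑ i, ∑ j, A i j * x i ^ 2 + 2 * ∑ i, ∑ j, A i j * x i * x j + ∑ i, ∑ j, A i j * x j ^ 2 := by
    simp only [Finset.mul_sum, ← Finset.sum_add_distrib]
    exact Finset.sum_congr rfl fun i _ => Finset.sum_congr rfl fun j _ => by ring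
  have hquad : x ⬝ᵥ (diagonal (fun i => ∑ j, A i j) + A) *ᵥ x =
      ∑ i, ∑ j, A i j * x i ^ 2 + ∑ i, ∑ j, A i j * x i * x j := by
    rw [add_mulVec, dotProduct_add]
    simp only [dotProduct, mulVec_diagonal]
    simp only [mulVec, dotProduct, Finset.mul_sum, Finset.sum_mul]
    congr 1 <;> exact Finset.sum_congr rfl fun i _ => Finset.sum_congr rfl fun j _ => by ring
  rw [hquad, hexpand, hswap]
  ring

theorem posSemidef_diagonal_rowSum_add {A : Matrix n n ℝ} (hA : A.IsSymm)
    (hA₀ : ∀ i j, 0 ≤ A i j) : (diagonal (fun i => ∑ j, A i j) + A).PosSemidef := by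
  refine .of_dotProduct_mulVec_nonneg ?_ fun x => ?_
  · exact isHermitian_iff_isSymm.2 ((isSymm_diagonal _).add hA)
  · rw [star_trivial, dotProduct_diagonal_rowSum_add_mulVec hA]
    exact mul_nonneg (by norm_num) (Finset.sum_nonneg fun i _ => Finset.sum_nonneg fun j _ =>
      mul_nonneg (hA₀ i j) (sq_nonneg _))

end Matrix

namespace Semigraph

variable {V : Type} [Fintype V] [DecidableEq V] (G : Semigraph V)

theorem sum_edges_sum_pairWeight_mul (f : V → V → ℝ) :
    ∑ e ∈ G.edges, (1 / 2 : ℝ) * ∑ u, ∑ v, G.pairWeight e u v * f u v =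
      1 / 2 * ∑ u, ∑ v, G.adj u v * f u v := by
  simp only [adj, Finset.mul_sum, Finset.sum_mul]
  rw [Finset.sum_comm]
  exact Finset.sum_congr rfl fun u _ => Finset.sum_comm

end Semigraph

/-- The signless Laplacian `Q = D + A` of any semigraph is positive
semi-definite, and its quadratic form is a sum over the edges of positively weighted
squares `μ (x_u + x_v)²` over the pairs of adjacent vertices within each edge
(the factor `1/2` compensates each unordered pair being counted twice). -/
theorem stmt4 {V : Type} [Fintype V] [DecidableEq V] (G : Semigraph V) :
    (Matrix.diagonal G.degree + G.adj).PosSemidef ∧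
      ∀ x : V → ℝ,
        x ⬝ᵥ (Matrix.diagonal G.degree + G.adj) *ᵥ x =
          ∑ e ∈ G.edges, (1/2 : ℝ) * ∑ u, ∑ v, G.pairWeight e u v * (x u + x v)^2 := by
  refine ⟨posSemidef_diagonal_rowSum_add G.adj_isSymm G.adj_nonneg, fun x => ?_⟩
  rw [G.sum_edges_sum_pairWeight_mul]
  exact dotProduct_diagonal_rowSum_add_mulVec G.adj_isSymm x
end

section
/- A semigraph G is connected if and only if the second smallest eigenvalue λ₂ of its Laplacian L satisfies λ₂ > 0; equivalently, G is connected if and only if the kernel of L is one-dimensional (spanned by the all-ones vector). -/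
open Matrix BigOperators

/-! For a symmetric matrix `W` with nonnegative entries, the Laplacian `L = diag(row sums) - W`
has quadratic form `2 xᵀ L x = ∑ᵥ ∑ᵤ W v u (x v - x u)²`, so `L x = 0` forces `x u = x v`
whenever `W u v ≠ 0`, and conversely. The semigraph weights are positive exactly on pairs of
distinct vertices sharing an edge, so the kernel of `L` consists of the functions constant along
edges. Such functions are all constant precisely when the edge relation links every pair of
vertices: otherwise the indicator of the vertices reachable from a fixed one is a non-constant
kernel vector. -/

theorem Relation.forall_reflTransGen_iff_forall_invariant_const {α β : Type*} [Nontrivial β]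
    {r : α → α → Prop} (hr : ∀ a b, r a b → r b a) :
    (∀ a b, Relation.ReflTransGen r a b) ↔
      ∀ x : α → β, (∀ a b, r a b → x a = x b) → ∃ c, x = fun _ => c := by
  classical
  constructor
  · intro hconn x hx
    have hconst (a b : α) : x a = x b := by
      induction hconn a b with
      | refl => rfl
      | tail _ hstep ih => exact ih.trans (hx _ _ hstep)
    rcases isEmpty_or_nonempty α with hα | ⟨⟨a₀⟩⟩
    · exact ⟨Classical.arbitrary β, funext isEmptyElim⟩
    · exact ⟨x a₀, funext fun a => hconst a a₀⟩
  · intro h a b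
    obtain ⟨y₀, y₁, hne⟩ := exists_pair_ne β
    let x : α → β := fun b => if Relation.ReflTransGen r a b then y₁ else y₀
    have hx : ∀ b c, r b c → x b = x c := fun b c hbc =>
      if_congr ⟨fun hab => hab.tail hbc, fun hac => hac.tail (hr b c hbc)⟩ rfl rfl
    obtain ⟨c, hc⟩ := h x hx
    have hxb : x b = x a := by rw [hc]
    by_contra hab
    simp only [x, if_neg hab, if_pos Relation.ReflTransGen.refl] at hxb
    exact hne hxb

theorem Matrix.diagonal_rowSum_sub_mulVec_apply {V R : Type*} [Fintype V] [DecidableEq V]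
    [CommRing R] (W : Matrix V V R) (x : V → R) (v : V) :
    ((diagonal (fun v => ∑ u, W v u) - W) *ᵥ x) v = ∑ u, W v u * (x v - x u) := by
  rw [sub_mulVec, Pi.sub_apply, mulVec_diagonal, Finset.sum_mul, mulVec, dotProduct,
    ← Finset.sum_sub_distrib]
  simp only [mul_sub]

theorem Matrix.sum_mul_sub_sq_eq_two_mul_dotProduct {V R : Type*} [Fintype V] [DecidableEq V]
    [CommRing R] {W : Matrix V V R} (hW : W.IsSymm) (x : V → R) :
    ∑ v, ∑ u, W v u * (x v - x u) ^ 2 =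
      2 * (x ⬝ᵥ (diagonal (fun v => ∑ u, W v u) - W) *ᵥ x) := by
  have hswap : ∑ v, ∑ u, W v u * (x v - x u) * x u = - ∑ v, ∑ u, W v u * (x v - x u) * x v := by
    rw [Finset.sum_comm, ← Finset.sum_neg_distrib]
    refine Finset.sum_congr rfl fun v _ => ?_
    rw [← Finset.sum_neg_distrib]
    refine Finset.sum_congr rfl fun u _ => ?_
    rw [← hW.apply u v]
    ring
  calc ∑ v, ∑ u, W v u * (x v - x u) ^ 2
      = ∑ v, ∑ u, W v u * (x v - x u) * x v - ∑ v, ∑ u, W v u * (x v - x u) * x u := by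
        simp only [← Finset.sum_sub_distrib]
        exact Finset.sum_congr rfl fun v _ => Finset.sum_congr rfl fun u _ => by ring
    _ = 2 * ∑ v, x v * ∑ u, W v u * (x v - x u) := by
        rw [hswap, sub_neg_eq_add, ← two_mul]
        simp only [Finset.mul_sum]
        exact Finset.sum_congr rfl fun v _ => Finset.sum_congr rfl fun u _ => by ring
    _ = 2 * (x ⬝ᵥ (diagonal (fun v => ∑ u, W v u) - W) *ᵥ x) := by
        simp only [dotProduct, diagonal_rowSum_sub_mulVec_apply]

theorem Matrix.diagonal_rowSum_sub_mulVec_eq_zero_iff {V R : Type*} [Fintype V] [DecidableEq V]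
    [CommRing R] [LinearOrder R] [IsStrictOrderedRing R] {W : Matrix V V R} (hW : W.IsSymm)
    (hW₀ : ∀ u v, 0 ≤ W u v) {x : V → R} :
    (diagonal (fun v => ∑ u, W v u) - W) *ᵥ x = 0 ↔ ∀ u v, W u v ≠ 0 → x u = x v := by
  constructor
  · intro hx u v huv
    have hterm_nonneg (v u : V) : 0 ≤ W v u * (x v - x u) ^ 2 :=
      mul_nonneg (hW₀ v u) (sq_nonneg _)
    have hsum : ∑ v, ∑ u, W v u * (x v - x u) ^ 2 = 0 := by
      rw [sum_mul_sub_sq_eq_two_mul_dotProduct hW, hx, dotProduct_zero, mul_zero]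
    have hterm : W u v * (x u - x v) ^ 2 = 0 := by
      rw [Finset.sum_eq_zero_iff_of_nonneg fun v _ =>
        Finset.sum_nonneg fun u _ => hterm_nonneg v u] at hsum
      exact (Finset.sum_eq_zero_iff_of_nonneg fun w _ => hterm_nonneg u w).1
        (hsum u (Finset.mem_univ u)) v (Finset.mem_univ v)
    rw [mul_eq_zero, or_iff_right huv, sq_eq_zero_iff, sub_eq_zero] at hterm
    exact hterm
  · intro h
    funext v
    rw [diagonal_rowSum_sub_mulVec_apply, Pi.zero_apply]
    refine Finset.sum_eq_zero fun u _ => ?_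
    by_cases huv : W v u = 0
    · rw [huv, zero_mul]
    · rw [h v u huv, sub_self, mul_zero]

namespace Semigraph

variable {V : Type} [Fintype V] [DecidableEq V] (G : Semigraph V)

theorem pairWeight_pos {e : List V} {u v : V} (hu : u ∈ e) (hv : v ∈ e) (huv : u ≠ v) :
    0 < G.pairWeight e u v := by
  have hdist : (0 : ℝ) < Nat.dist (e.idxOf u) (e.idxOf v) :=
    Nat.cast_pos.2 (Nat.dist_pos_of_ne fun h => huv ((List.idxOf_inj hu).1 h))
  unfold pairWeight
  rw [if_pos ⟨hu, hv, huv⟩]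
  split_ifs <;> positivity

theorem pairWeight_ne_zero_iff {e : List V} {u v : V} :
    G.pairWeight e u v ≠ 0 ↔ u ∈ e ∧ v ∈ e ∧ u ≠ v := by
  refine ⟨fun h => ?_, fun ⟨hu, hv, huv⟩ => (G.pairWeight_pos hu hv huv).ne'⟩
  by_contra hnot
  exact h (by rw [pairWeight, if_neg hnot])

theorem adj_ne_zero_iff {u v : V} : G.adj u v ≠ 0 ↔ G.Adjacent u v := by
  rw [adj, Ne, Finset.sum_eq_zero_iff_of_nonneg fun e _ => G.pairWeight_nonneg e u v]
  simp only [not_forall, ← ne_eq, pairWeight_ne_zero_iff, exists_prop]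
  exact ⟨fun ⟨e, he, hu, hv, huv⟩ => ⟨huv, e, he, hu, hv⟩,
    fun ⟨huv, e, he, hu, hv⟩ => ⟨e, he, hu, hv, huv⟩⟩

theorem lap_mulVec_eq_zero_iff {x : V → ℝ} :
    G.lap *ᵥ x = 0 ↔ ∀ u v, (∃ e ∈ G.edges, u ∈ e ∧ v ∈ e) → x u = x v := by
  change (diagonal (fun v => ∑ u, G.adj v u) - G.adj) *ᵥ x = 0 ↔ _
  rw [diagonal_rowSum_sub_mulVec_eq_zero_iff G.adj_isSymm G.adj_nonneg]
  simp only [adj_ne_zero_iff]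
  refine forall₂_congr fun u v => ⟨fun h hshared => ?_, fun h ⟨_, hshared⟩ => h hshared⟩
  by_cases huv : u = v
  · rw [huv]
  · exact h ⟨huv, hshared⟩

end Semigraph

/-- A semigraph is connected if and only if the second smallest Laplacian
eigenvalue is positive; equivalently, iff the kernel of `L` is exactly the span of the
all-ones vector, i.e. every vector in the kernel is constant. -/
theorem stmt6 {V : Type} [Fintype V] [DecidableEq V] (G : Semigraph V) :
    G.Connected ↔ ∀ x : V → ℝ, G.lap *ᵥ x = 0 → ∃ c : ℝ, x = fun _ => c := by
  simp only [Semigraph.lap_mulVec_eq_zero_iff]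
  exact Relation.forall_reflTransGen_iff_forall_invariant_const
    fun a b ⟨e, he, ha, hb⟩ => ⟨e, he, hb, ha⟩
end

section
/- Let G be a connected semigraph and f a vector with Lf = 0, where L is the Laplacian. Then f is constant, i.e., f is a scalar multiple of the all-ones vector. -/
open Matrix BigOperators

/-! A harmonic function attains its maximum at some vertex `u`; since `(L f) u` is a
positively weighted sum of the differences `f u - f v`, all of which are nonnegative,
every neighbour of `u` attains the maximum too, and connectivity spreads this to all
vertices. -/

theorem eq_of_forall_le_of_sum_mul_sub_eq_zero {ι : Type*} [Fintype ι] {w f : ι → ℝ} {u v : ι}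
    (hw : ∀ i, 0 ≤ w i) (hmax : ∀ i, f i ≤ f u) (hsum : ∑ i, w i * (f u - f i) = 0)
    (hv : 0 < w v) : f v = f u := by
  have hnonneg : ∀ i ∈ Finset.univ, 0 ≤ w i * (f u - f i) := fun i _ =>
    mul_nonneg (hw i) (sub_nonneg.2 (hmax i))
  have hzero := (Finset.sum_eq_zero_iff_of_nonneg hnonneg).1 hsum v (Finset.mem_univ v)
  linarith [(mul_eq_zero.1 hzero).resolve_left hv.ne']

namespace Semigraph

variable {V : Type} [Fintype V] [DecidableEq V] (G : Semigraph V)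

theorem adj_pos {e : List V} (he : e ∈ G.edges) {u v : V} (hu : u ∈ e) (hv : v ∈ e)
    (huv : u ≠ v) : 0 < G.adj u v :=
  Finset.sum_pos' (fun e _ => G.pairWeight_nonneg e u v) ⟨e, he, G.pairWeight_pos hu hv huv⟩

theorem lap_mulVec_apply (f : V → ℝ) (u : V) :
    (G.lap *ᵥ f) u = ∑ v, G.adj u v * (f u - f v) := by
  rw [lap, sub_mulVec, Pi.sub_apply, mulVec_diagonal, degree, Finset.sum_mul]
  simp only [mulVec, dotProduct, mul_sub, Finset.sum_sub_distrib]

theorem Connected.forall_of_closed {G : Semigraph V} (hG : G.Connected) {p : V → Prop}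
    {u : V} (hu : p u) (hclosed : ∀ a b, p a → (∃ e ∈ G.edges, a ∈ e ∧ b ∈ e) → p b)
    (v : V) : p v := by
  induction hG u v with
  | refl => exact hu
  | tail _ hab ih => exact hclosed _ _ ih hab

end Semigraph

/-- If `G` is a connected semigraph and `L f = 0`, then `f` is a constant
vector. -/
theorem stmt8 {V : Type} [Fintype V] [DecidableEq V] (G : Semigraph V)
    (hG : G.Connected) (f : V → ℝ) (hf : G.lap *ᵥ f = 0) :
    ∃ c : ℝ, f = fun _ => c := by
  cases isEmpty_or_nonempty V with
  | inl hV => exact ⟨0, funext fun v => isEmptyElim v⟩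
  | inr hV =>
    obtain ⟨u, hmax⟩ := Finite.exists_max f
    refine ⟨f u, funext <| hG.forall_of_closed (p := fun v => f v = f u) rfl ?_⟩
    rintro a b (ha : f a = f u) ⟨e, he, hae, hbe⟩
    by_cases hab : a = b
    · rwa [← hab]
    have hmax_a : ∀ v, f v ≤ f a := fun v => ha ▸ hmax v
    have harmonic : ∑ v, G.adj a v * (f a - f v) = 0 := by
      rw [← G.lap_mulVec_apply, hf, Pi.zero_apply]
    exact (eq_of_forall_le_of_sum_mul_sub_eq_zero (G.adj_nonneg a) hmax_a harmonic
      (G.adj_pos he hae hbe hab)).trans ha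
end
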